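/- arXiv:2408.13767 — 4 statements merged into one kernel-verified Lean document; each statement's English description precedes it below -/
import Mathlib

section
/- Under gradient flow on the overparameterized objective φ(W₁,…,Wₙ) = ℓ(Wₙ⋯W₁), for each j = 1,…,n−1 the quantity Wⱼ₊₁(t)ᵀWⱼ₊₁(t) − Wⱼ(t)Wⱼ(t)ᵀ is constant in time: for all t ≥ 0, Wⱼ₊₁(t)ᵀWⱼ₊₁(t) − Wⱼ(t)Wⱼ(t)ᵀ = Wⱼ₊₁(0)ᵀWⱼ₊₁(0) − Wⱼ(0)Wⱼ(0)ᵀ. -/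
/-!
The derivative of `Wⱼ₊₁ᵀ Wⱼ₊₁ − Wⱼ Wⱼᵀ` is `Ẇⱼ₊₁ᵀ Wⱼ₊₁ + Wⱼ₊₁ᵀ Ẇⱼ₊₁ − Ẇⱼ Wⱼᵀ − Wⱼ Ẇⱼᵀ`.
Writing `P = Wₙ⋯Wⱼ₊₂`, `Q = Wⱼ₋₁⋯W₁` and `G = ∇ℓ(Wₙ⋯W₁)`, the flow gives
`Ẇⱼ₊₁ = −Pᵀ G (Wⱼ Q)ᵀ` and `Ẇⱼ = −(P Wⱼ₊₁)ᵀ G Qᵀ`, so both `Wⱼ₊₁ᵀ Ẇⱼ₊₁` and `Ẇⱼ Wⱼᵀ` equal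
`−(P Wⱼ₊₁)ᵀ G (Wⱼ Q)ᵀ`, and the derivative vanishes.
-/

open Matrix

/-- Product `W (m-1) * ⋯ * W j` of a chain of matrices with dimensions given by `d`
(the identity when `m = j`, junk when `m < j`). -/
noncomputable def chain (d : ℕ → ℕ) (W : ∀ k : ℕ, Matrix (Fin (d (k + 1))) (Fin (d k)) ℝ)
    (j : ℕ) : (m : ℕ) → Matrix (Fin (d m)) (Fin (d j)) ℝ
  | 0 => if h : j = 0 then by subst h; exact 1 else 0
  | m + 1 => if h : j = m + 1 then by subst h; exact 1 else W m * chain d W j m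

section Chain

variable (d : ℕ → ℕ) (W : ∀ k : ℕ, Matrix (Fin (d (k + 1))) (Fin (d k)) ℝ)

lemma chain_self (j : ℕ) : chain d W j j = 1 := by
  cases j <;> simp [chain]

lemma chain_succ {j m : ℕ} (h : j ≤ m) : chain d W j (m + 1) = W m * chain d W j m := by
  rw [chain, dif_neg (by omega)]

lemma chain_eq_chain_succ_mul {j m : ℕ} (h : j < m) :
    chain d W j m = chain d W (j + 1) m * W j := by
  induction m, h using Nat.le_induction with
  | base => rw [chain_succ d W le_rfl, chain_self, chain_self, Matrix.mul_one, Matrix.one_mul]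
  | succ m hjm ih =>
    rw [chain_succ d W (Nat.le_of_succ_le hjm), ih, chain_succ d W hjm, Matrix.mul_assoc]

end Chain

section EntrywiseDeriv

variable {𝕜 : Type*} [NontriviallyNormedField 𝕜] {l m n : Type*} [Fintype m]

theorem HasDerivAt.matrix_mul_apply {A : 𝕜 → Matrix l m 𝕜} {B : 𝕜 → Matrix m n 𝕜}
    {A' : Matrix l m 𝕜} {B' : Matrix m n 𝕜} {t : 𝕜}
    (hA : ∀ i k, HasDerivAt (fun s => A s i k) (A' i k) t)
    (hB : ∀ k j, HasDerivAt (fun s => B s k j) (B' k j) t) (i : l) (j : n) :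
    HasDerivAt (fun s => (A s * B s) i j) ((A' * B t + A t * B') i j) t := by
  simp only [Matrix.add_apply, Matrix.mul_apply, ← Finset.sum_add_distrib]
  exact HasDerivAt.fun_sum fun k _ => (hA i k).mul (hB k j)

end EntrywiseDeriv

theorem Matrix.eq_of_hasDerivAt_apply_zero {m n : Type*} {M : ℝ → Matrix m n ℝ}
    (h : ∀ t i j, HasDerivAt (fun s => M s i j) 0 t) (x y : ℝ) : M x = M y := by
  ext i j
  exact is_const_of_deriv_eq_zero (fun t => (h t i j).differentiableAt)
    (fun t => (h t i j).deriv) x y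

theorem Matrix.gradient_flow_balance {R : Type*} [CommRing R] {k l m n o : Type*}
    [Fintype k] [Fintype l] [Fintype n] [Fintype o]
    {P : Matrix k l R} {G : Matrix k o R} {Q : Matrix n o R} {A A' : Matrix l m R}
    {B B' : Matrix m n R} (hA' : A' = -(Pᵀ * G * (B * Q)ᵀ)) (hB' : B' = -((P * A)ᵀ * G * Qᵀ)) :
    A'ᵀ * A + Aᵀ * A' = B' * Bᵀ + B * B'ᵀ := by
  subst hA' hB'
  simp only [transpose_neg, transpose_mul, transpose_transpose, Matrix.neg_mul, Matrix.mul_neg,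
    Matrix.mul_assoc]
  abel

/-- Under gradient flow on the overparameterized objective `φ(W₁,…,Wₙ) = ℓ(Wₙ ⋯ W₁)`
(where `gradℓ` is the gradient of the loss `ℓ`, and the flow equations are
`Ẇⱼ(t) = −(Wₙ⋯Wⱼ₊₁)ᵀ(t) ∇ℓ(Wₙ(t)⋯W₁(t)) (Wⱼ₋₁⋯W₁)ᵀ(t)`, here with 0-based layer
indices `k = 0,…,n−1`), the quantity `Wⱼ₊₁(t)ᵀ Wⱼ₊₁(t) − Wⱼ(t) Wⱼ(t)ᵀ` is constant in time:
for all `t ≥ 0` it equals its value at `t = 0`. -/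
theorem balancedness_conserved (d : ℕ → ℕ) (n : ℕ)
    (gradℓ : Matrix (Fin (d n)) (Fin (d 0)) ℝ → Matrix (Fin (d n)) (Fin (d 0)) ℝ)
    (W : ∀ k : ℕ, ℝ → Matrix (Fin (d (k + 1))) (Fin (d k)) ℝ)
    (W' : ∀ k : ℕ, ℝ → Matrix (Fin (d (k + 1))) (Fin (d k)) ℝ)
    (hderiv : ∀ k < n, ∀ (t : ℝ) (i : Fin (d (k + 1))) (i' : Fin (d k)),
      HasDerivAt (fun s => W k s i i') (W' k t i i') t)
    (hflow : ∀ k < n, ∀ t : ℝ,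
      W' k t = -((chain d (fun k' => W k' t) (k + 1) n)ᵀ *
        gradℓ (chain d (fun k' => W k' t) 0 n) * (chain d (fun k' => W k' t) 0 k)ᵀ)) :
    ∀ j : ℕ, j + 1 < n → ∀ t : ℝ, 0 ≤ t →
      (W (j + 1) t)ᵀ * W (j + 1) t - W j t * (W j t)ᵀ
        = (W (j + 1) 0)ᵀ * W (j + 1) 0 - W j 0 * (W j 0)ᵀ := by
  intro j hj t _
  have hj' : j < n := by omega
  refine Matrix.eq_of_hasDerivAt_apply_zero
    (M := fun s => (W (j + 1) s)ᵀ * W (j + 1) s - W j s * (W j s)ᵀ) (fun s i i' => ?_) t 0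
  have hbalance : (W' (j + 1) s)ᵀ * W (j + 1) s + (W (j + 1) s)ᵀ * W' (j + 1) s
      = W' j s * (W j s)ᵀ + W j s * (W' j s)ᵀ := by
    have hA' := hflow (j + 1) hj s
    have hB' := hflow j hj' s
    rw [chain_succ d _ (Nat.zero_le j)] at hA'
    rw [chain_eq_chain_succ_mul d _ hj] at hB'
    exact Matrix.gradient_flow_balance hA' hB'
  have hA := hderiv (j + 1) hj s
  have hB := hderiv j hj' s
  have hD := (HasDerivAt.matrix_mul_apply (A := fun s => (W (j + 1) s)ᵀ)
      (A' := (W' (j + 1) s)ᵀ) (fun a b => hA b a) hA i i').sub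
    (HasDerivAt.matrix_mul_apply (B := fun s => (W j s)ᵀ) (B' := (W' j s)ᵀ) hB
      (fun a b => hB b a) i i')
  rwa [hbalance, sub_self] at hD
end

section
/- Let W₁,…,Wₙ be square d×d matrices with Wⱼ₊₁ᵀWⱼ₊₁ = WⱼWⱼᵀ for all j = 1,…,n−1, and let W := Wₙ⋯W₁. Then for each j = 1,…,n: (Wₙ⋯Wⱼ₊₁)(Wₙ⋯Wⱼ₊₁)ᵀ = (WWᵀ)^{(n−j)/n} and (Wⱼ₋₁⋯W₁)ᵀ(Wⱼ₋₁⋯W₁) = (WᵀW)^{(j−1)/n}, where A^{β} for positive semidefinite A denotes the matrix power defined via the spectral decomposition (with A⁰ = I). -/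
open Matrix

/-- The spectral real power `A ^ β` of a (positive semidefinite) symmetric real matrix, defined
via the spectral decomposition (with `0 ^ 0 = 1`, so `A ^ 0 = I`); junk value `0` if `A` is not
symmetric. -/
noncomputable def psdPow {m : ℕ} (A : Matrix (Fin m) (Fin m) ℝ) (β : ℝ) :
    Matrix (Fin m) (Fin m) ℝ :=
  if hA : A.IsHermitian then hA.cfc (fun x => x ^ β) else 0

lemma mul_pow_mul_mul {M : Type*} [Monoid M] (a b : M) (p : ℕ) :
    a * (b * a) ^ p * b = (a * b) ^ (p + 1) := by
  rw [← mul_pow_mul, mul_assoc, ← pow_succ]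

section GramSequence

variable {d : ℕ} {W G : ℕ → Matrix (Fin d) (Fin d) ℝ}

lemma chain_mul_pow_mul_transpose_chain {j m : ℕ}
    (hG : ∀ i < m, (W i)ᵀ * W i = G i ∧ W i * (W i)ᵀ = G (i + 1)) (hjm : j ≤ m) (p : ℕ) :
    chain (fun _ => d) W j m * G j ^ p * (chain (fun _ => d) W j m)ᵀ = G m ^ (p + (m - j)) := by
  induction m, hjm using Nat.le_induction generalizing p with
  | base => simp [chain_self]
  | succ m hjm ih =>
    obtain ⟨hleft, hright⟩ := hG m (by omega)
    calc chain (fun _ => d) W j (m + 1) * G j ^ p * (chain (fun _ => d) W j (m + 1))ᵀ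
        = W m * (chain (fun _ => d) W j m * G j ^ p * (chain (fun _ => d) W j m)ᵀ)
            * (W m)ᵀ := by
          simp only [chain_succ _ _ hjm, transpose_mul, mul_assoc]
      _ = W m * ((W m)ᵀ * W m) ^ (p + (m - j)) * (W m)ᵀ := by
          rw [ih (fun i hi => hG i (by omega)), hleft]
      _ = G (m + 1) ^ (p + (m + 1 - j)) := by
          rw [mul_pow_mul_mul, hright, show p + (m + 1 - j) = p + (m - j) + 1 by omega]

lemma transpose_chain_mul_pow_mul_chain {j m : ℕ}
    (hG : ∀ i < m, (W i)ᵀ * W i = G i ∧ W i * (W i)ᵀ = G (i + 1)) (hjm : j ≤ m) (p : ℕ) :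
    (chain (fun _ => d) W j m)ᵀ * G m ^ p * chain (fun _ => d) W j m = G j ^ (p + (m - j)) := by
  induction m, hjm using Nat.le_induction generalizing p with
  | base => simp [chain_self]
  | succ m hjm ih =>
    obtain ⟨hleft, hright⟩ := hG m (by omega)
    calc (chain (fun _ => d) W j (m + 1))ᵀ * G (m + 1) ^ p * chain (fun _ => d) W j (m + 1)
        = (chain (fun _ => d) W j m)ᵀ * ((W m)ᵀ * (W m * (W m)ᵀ) ^ p * W m)
            * chain (fun _ => d) W j m := by
          simp only [chain_succ _ _ hjm, transpose_mul, hright, mul_assoc]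
      _ = (chain (fun _ => d) W j m)ᵀ * G m ^ (p + 1) * chain (fun _ => d) W j m := by
          rw [mul_pow_mul_mul, hleft]
      _ = G j ^ (p + (m + 1 - j)) := by
          rw [ih (fun i hi => hG i (by omega)), show p + 1 + (m - j) = p + (m + 1 - j) by omega]

lemma exists_gram_sequence_of_balanced {n : ℕ}
    (hbal : ∀ j : ℕ, j + 1 < n → (W (j + 1))ᵀ * W (j + 1) = W j * (W j)ᵀ) :
    ∃ G : ℕ → Matrix (Fin d) (Fin d) ℝ,
      ∀ i < n, (W i)ᵀ * W i = G i ∧ W i * (W i)ᵀ = G (i + 1) := by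
  refine ⟨fun | 0 => (W 0)ᵀ * W 0 | i + 1 => W i * (W i)ᵀ, fun i hi => ?_⟩
  cases i with
  | zero => exact ⟨rfl, rfl⟩
  | succ i => exact ⟨hbal i hi, rfl⟩

end GramSequence

lemma psdPow_pow_div {m : ℕ} {A : Matrix (Fin m) (Fin m) ℝ} (hA : A.PosSemidef)
    {n : ℕ} (hn : n ≠ 0) (p : ℕ) : psdPow (A ^ n) ((p : ℝ) / n) = A ^ p := by
  have hAn : (A ^ n).IsHermitian := (hA.pow n).isHermitian
  have hsa : IsSelfAdjoint A := hA.isHermitian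
  rw [psdPow, dif_pos hAn, ← hAn.cfc_eq,
    ← cfc_comp_pow (fun x : ℝ => x ^ ((p : ℝ) / n)) n A
      ((Matrix.finite_real_spectrum.image _).continuousOn _) hsa,
    ← cfc_pow_id (R := ℝ) A p hsa]
  refine cfc_congr fun x hx => ?_
  have hx0 : 0 ≤ x := by
    obtain ⟨i, rfl⟩ := hA.isHermitian.spectrum_real_eq_range_eigenvalues ▸ hx
    exact hA.eigenvalues_nonneg i
  have hexp : (n : ℝ) * ((p : ℝ) / n) = p := by field_simp
  rw [← Real.rpow_natCast x n, ← Real.rpow_mul hx0, hexp, Real.rpow_natCast]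

/-- For balanced square matrices `W₁,…,Wₙ` (0-indexed: layer `j ∈ {1,…,n}` of the paper is
`k = j - 1` here) with end-to-end matrix `P = Wₙ⋯W₁`:
`(Wₙ⋯Wⱼ₊₁)(Wₙ⋯Wⱼ₊₁)ᵀ = (P Pᵀ)^{(n−j)/n}` and `(Wⱼ₋₁⋯W₁)ᵀ(Wⱼ₋₁⋯W₁) = (Pᵀ P)^{(j−1)/n}`. -/
theorem balanced_partial_products_are_powers {d n : ℕ}
    (W : ℕ → Matrix (Fin d) (Fin d) ℝ)
    (hbal : ∀ j : ℕ, j + 1 < n → (W (j + 1))ᵀ * W (j + 1) = W j * (W j)ᵀ) :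
    ∀ k < n,
      chain (fun _ => d) W (k + 1) n * (chain (fun _ => d) W (k + 1) n)ᵀ
        = psdPow (chain (fun _ => d) W 0 n * (chain (fun _ => d) W 0 n)ᵀ)
            (((n : ℝ) - (k + 1)) / n) ∧
      (chain (fun _ => d) W 0 k)ᵀ * chain (fun _ => d) W 0 k
        = psdPow ((chain (fun _ => d) W 0 n)ᵀ * chain (fun _ => d) W 0 n) ((k : ℝ) / n) := by
  intro k hk
  obtain ⟨G, hG⟩ := exists_gram_sequence_of_balanced hbal
  have hn : n ≠ 0 := by omega
  have hGn : (G n).PosSemidef := by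
    simpa [(hG (n - 1) (by omega)).2, Nat.sub_add_cancel (Nat.one_le_iff_ne_zero.2 hn)]
      using posSemidef_self_mul_conjTranspose (W (n - 1))
  have hG0 : (G 0).PosSemidef := by
    simpa [(hG 0 (by omega)).1] using posSemidef_conjTranspose_mul_self (W 0)
  have hexp : ((n : ℝ) - (k + 1)) / n = ((n - (k + 1) : ℕ) : ℝ) / n := by
    push_cast [Nat.cast_sub hk]; ring
  constructor
  · have hhead := chain_mul_pow_mul_transpose_chain hG hk 0
    have hfull := chain_mul_pow_mul_transpose_chain hG (Nat.zero_le n) 0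
    simp only [pow_zero, mul_one, zero_add, Nat.sub_zero] at hhead hfull
    rw [hhead, hfull, hexp, psdPow_pow_div hGn hn]
  · have htail := transpose_chain_mul_pow_mul_chain (fun i hi => hG i (hi.trans hk)) (Nat.zero_le k) 0
    have hfull := transpose_chain_mul_pow_mul_chain hG (Nat.zero_le n) 0
    simp only [pow_zero, mul_one, zero_add, Nat.sub_zero] at htail hfull
    rw [htail, hfull, psdPow_pow_div hG0 hn]
end

section
/- For any W ∈ ℝ^{d×d'} with ε := ‖W‖_F > 0, there exist matrices W₁,…,Wₙ with Wₙ⋯W₁ = W and ‖Wⱼ‖_F ≤ √(min{d,d'}) · ε^{1/n} for each j. -/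
open Matrix

/-- The Frobenius norm of a real matrix. -/
noncomputable def frobNorm {p q : ℕ} (M : Matrix (Fin p) (Fin q) ℝ) : ℝ :=
  Real.sqrt (∑ i, ∑ j, (M i j) ^ 2)

/-! ### Auxiliary material -/

noncomputable def Emat (m p q : ℕ) : Matrix (Fin p) (Fin q) ℝ :=
  Matrix.of fun a b => if (a : ℕ) = (b : ℕ) ∧ (a : ℕ) < m then 1 else 0

lemma Emat_apply (m p q : ℕ) (a : Fin p) (b : Fin q) :
    Emat m p q a b = if (a : ℕ) = (b : ℕ) ∧ (a : ℕ) < m then 1 else 0 := rfl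

lemma Emat_mul {m p q r : ℕ} (h : min m (min p r) ≤ q) :
    Emat m p q * Emat m q r = Emat m p r := by
  ext a c
  rw [Matrix.mul_apply, Emat_apply]
  by_cases hac : (a : ℕ) = (c : ℕ) ∧ (a : ℕ) < m
  · have haq : (a : ℕ) < q := by
      have h1 := a.isLt; have h2 := c.isLt; omega
    rw [Finset.sum_eq_single (⟨(a : ℕ), haq⟩ : Fin q)]
    · have e1 : Emat m p q a ⟨(a : ℕ), haq⟩ = 1 := by
        rw [Emat_apply]; exact if_pos ⟨rfl, hac.2⟩
      have e2 : Emat m q r ⟨(a : ℕ), haq⟩ c = 1 := by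
        rw [Emat_apply]; exact if_pos ⟨hac.1, hac.2⟩
      rw [if_pos hac, e1, e2, mul_one]
    · intro b _ hb
      have hab : ¬ ((a : ℕ) = (b : ℕ)) := fun he => hb (Fin.ext he.symm)
      rw [Emat_apply]
      rw [if_neg (fun hc => hab hc.1), zero_mul]
    · simp
  · rw [if_neg hac]
    refine Finset.sum_eq_zero fun b _ => ?_
    rw [Emat_apply, Emat_apply]
    by_cases h1 : (a : ℕ) = (b : ℕ) ∧ (a : ℕ) < m
    · have h2 : ¬ ((b : ℕ) = (c : ℕ) ∧ (b : ℕ) < m) := by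
        intro h2
        exact hac ⟨h1.1.trans h2.1, h1.2⟩
      rw [if_neg h2, mul_zero]
    · rw [if_neg h1, zero_mul]

lemma Emat_eq_one {m p : ℕ} (h : p ≤ m) : Emat m p p = 1 := by
  ext a b
  rw [Emat_apply, Matrix.one_apply]
  have ham := a.isLt
  by_cases hab : a = b
  · subst hab
    rw [if_pos ⟨rfl, by omega⟩, if_pos rfl]
  · have h2 : ¬ ((a : ℕ) = (b : ℕ)) := fun he => hab (Fin.ext he)
    rw [if_neg (fun hc => h2 hc.1), if_neg hab]

lemma Emat_transpose (m p q : ℕ) : (Emat m p q)ᵀ = Emat m q p := by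
  ext a b
  rw [Matrix.transpose_apply, Emat_apply, Emat_apply]
  by_cases h : (b : ℕ) = (a : ℕ) ∧ (b : ℕ) < m
  · rw [if_pos h, if_pos ⟨h.1.symm, h.1 ▸ h.2⟩]
  · rw [if_neg h, if_neg (fun hc : (a : ℕ) = (b : ℕ) ∧ (a : ℕ) < m =>
      h ⟨hc.1.symm, hc.1 ▸ hc.2⟩)]

lemma frobNorm_nonneg {p q : ℕ} (M : Matrix (Fin p) (Fin q) ℝ) : 0 ≤ frobNorm M :=
  Real.sqrt_nonneg _

lemma frobNorm_smul {p q : ℕ} (c : ℝ) (M : Matrix (Fin p) (Fin q) ℝ) :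
    frobNorm (c • M) = |c| * frobNorm M := by
  unfold frobNorm
  rw [← Real.sqrt_sq_eq_abs, ← Real.sqrt_mul (sq_nonneg c)]
  congr 1
  rw [Finset.mul_sum]
  refine Finset.sum_congr rfl fun i _ => ?_
  rw [Finset.mul_sum]
  refine Finset.sum_congr rfl fun j _ => ?_
  simp [mul_pow]

lemma frobNorm_transpose {p q : ℕ} (M : Matrix (Fin p) (Fin q) ℝ) :
    frobNorm Mᵀ = frobNorm M := by
  unfold frobNorm
  congr 1
  rw [Finset.sum_comm]
  rfl

lemma frobNorm_Emat_le (m p q : ℕ) : frobNorm (Emat m p q) ≤ Real.sqrt m := by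
  unfold frobNorm
  apply Real.sqrt_le_sqrt
  have hinner : ∀ a : Fin p, (∑ b : Fin q, (Emat m p q a b) ^ 2)
      ≤ if (a : ℕ) < m then (1:ℝ) else 0 := by
    intro a
    by_cases ha : (a : ℕ) < m
    · rw [if_pos ha]
      by_cases haq : (a : ℕ) < q
      · rw [Finset.sum_eq_single (⟨(a : ℕ), haq⟩ : Fin q)]
        · rw [Emat_apply, if_pos ⟨rfl, ha⟩]; norm_num
        · intro b _ hb
          have hab : ¬ ((a : ℕ) = (b : ℕ)) := fun he => hb (Fin.ext he.symm)
          rw [Emat_apply, if_neg (fun hc => hab hc.1)]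
          norm_num
        · simp
      · rw [Finset.sum_eq_zero]
        · norm_num
        intro b _
        have : ¬ ((a : ℕ) = (b : ℕ)) := by have := b.isLt; omega
        simp [Emat_apply, this]
    · rw [if_neg ha, Finset.sum_eq_zero]
      intro b _
      simp [Emat_apply, ha]
  calc (∑ a : Fin p, ∑ b : Fin q, (Emat m p q a b) ^ 2)
      ≤ ∑ a : Fin p, if (a : ℕ) < m then (1:ℝ) else 0 :=
        Finset.sum_le_sum fun a _ => hinner a
    _ ≤ (m : ℝ) := by
        rw [Fin.sum_univ_eq_sum_range (fun i => if i < m then (1:ℝ) else 0)]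
        calc (∑ i ∈ Finset.range p, if i < m then (1:ℝ) else 0)
            = ((Finset.range p).filter (· < m)).card := by
              rw [Finset.sum_boole]
          _ ≤ (m : ℝ) := by
              have : ((Finset.range p).filter (· < m)).card ≤ m := by
                have hsub : (Finset.range p).filter (· < m) ⊆ Finset.range m := by
                  intro x hx
                  simp only [Finset.mem_filter, Finset.mem_range] at hx ⊢
                  exact hx.2
                simpa using Finset.card_le_card hsub
              exact_mod_cast this

lemma mul_Emat_entry {m p q r : ℕ} (hpm : p ≤ m) (A : Matrix (Fin r) (Fin p) ℝ)
    (i : Fin r) (j : Fin q) :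
    (A * Emat m p q) i j = if h : (j : ℕ) < p then A i ⟨(j : ℕ), h⟩ else 0 := by
  rw [Matrix.mul_apply]
  by_cases h : (j : ℕ) < p
  · rw [dif_pos h, Finset.sum_eq_single (⟨(j : ℕ), h⟩ : Fin p)]
    · rw [Emat_apply, if_pos ⟨rfl, by omega⟩, mul_one]
    · intro b _ hb
      have hbj : ¬ ((b : ℕ) = (j : ℕ)) := fun he => hb (Fin.ext he)
      rw [Emat_apply, if_neg (fun hc => hbj hc.1), mul_zero]
    · simp
  · rw [dif_neg h, Finset.sum_eq_zero]
    intro b _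
    have : ¬ ((b : ℕ) = (j : ℕ)) := by have := b.isLt; omega
    simp [Emat_apply, this]

lemma frobNorm_mul_Emat {m p q r : ℕ} (hpm : p ≤ m) (hpq : p ≤ q)
    (A : Matrix (Fin r) (Fin p) ℝ) :
    frobNorm (A * Emat m p q) = frobNorm A := by
  unfold frobNorm
  congr 1
  refine Finset.sum_congr rfl fun i _ => ?_
  have key : ∀ j : Fin q, ((A * Emat m p q) i j) ^ 2
      = (fun jj : ℕ => (if h : jj < p then A i ⟨jj, h⟩ else 0) ^ 2) (j : ℕ) := by
    intro j; rw [mul_Emat_entry hpm]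
  calc (∑ j : Fin q, ((A * Emat m p q) i j) ^ 2)
      = ∑ j ∈ Finset.range q, (if h : j < p then A i ⟨j, h⟩ else 0) ^ 2 := by
        rw [Finset.sum_congr rfl fun j _ => key j,
          Fin.sum_univ_eq_sum_range (fun jj : ℕ => (if h : jj < p then A i ⟨jj, h⟩ else 0) ^ 2)]
    _ = ∑ j ∈ Finset.range p, (if h : j < p then A i ⟨j, h⟩ else 0) ^ 2 := by
        refine (Finset.sum_subset (Finset.range_subset_range.2 hpq) ?_).symm
        intro x _ hx
        simp only [Finset.mem_range] at hx
        rw [dif_neg hx]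
        norm_num
    _ = ∑ b : Fin p, (A i b) ^ 2 := by
        rw [← Fin.sum_univ_eq_sum_range (fun jj : ℕ => (if h : jj < p then A i ⟨jj, h⟩ else 0) ^ 2)]
        refine Finset.sum_congr rfl fun b _ => ?_
        rw [dif_pos b.isLt]

lemma frobNorm_Emat_mul {m p q r : ℕ} (hqm : q ≤ m) (hqp : q ≤ p)
    (A : Matrix (Fin q) (Fin r) ℝ) :
    frobNorm (Emat m p q * A) = frobNorm A := by
  rw [← frobNorm_transpose (Emat m p q * A), Matrix.transpose_mul, Emat_transpose,
    frobNorm_mul_Emat hqm hqp, frobNorm_transpose]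

lemma frobNorm_pos_dims {p q : ℕ} (M : Matrix (Fin p) (Fin q) ℝ) (h : 0 < frobNorm M) :
    0 < p ∧ 0 < q := by
  constructor
  · rcases Nat.eq_zero_or_pos p with hp | hp
    · subst hp
      simp [frobNorm] at h
    · exact hp
  · rcases Nat.eq_zero_or_pos q with hq | hq
    · subst hq
      simp [frobNorm] at h
    · exact hq

lemma chain_zero (d : ℕ → ℕ) (Ws : ∀ k : ℕ, Matrix (Fin (d (k + 1))) (Fin (d k)) ℝ) :
    chain d Ws 0 0 = 1 := by
  simp [chain]

lemma chain_succ_s10 (d : ℕ → ℕ) (Ws : ∀ k : ℕ, Matrix (Fin (d (k + 1))) (Fin (d k)) ℝ)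
    (M : ℕ) : chain d Ws 0 (M + 1) = Ws M * chain d Ws 0 M := by
  rw [chain, dif_neg (by omega : ¬ (0 : ℕ) = M + 1)]

lemma chainA (dims : ℕ → ℕ) (Ws : ∀ k : ℕ, Matrix (Fin (dims (k + 1))) (Fin (dims k)) ℝ)
    (m N : ℕ) (c : ℝ)
    (hd0 : dims 0 ≤ m)
    (hWs : ∀ k, k < N → Ws k = c • Emat m (dims (k + 1)) (dims k))
    (hmid : ∀ k, 0 < k → k < N + 1 → m ≤ dims k) :
    ∀ M, M ≤ N → chain dims Ws 0 M = c ^ M • Emat m (dims M) (dims 0) := by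
  intro M
  induction M with
  | zero =>
    intro _
    rw [chain_zero, pow_zero, one_smul, Emat_eq_one hd0]
  | succ M ih =>
    intro hM
    have hcond : min m (min (dims (M + 1)) (dims 0)) ≤ dims M := by
      rcases Nat.eq_zero_or_pos M with h0 | h0
      · rw [h0]; omega
      · have := hmid M h0 (by omega); omega
    rw [chain_succ_s10, ih (by omega), hWs M (by omega), Matrix.smul_mul, Matrix.mul_smul,
      smul_smul, Emat_mul hcond, ← pow_succ']

lemma chainB (dims : ℕ → ℕ) (Ws : ∀ k : ℕ, Matrix (Fin (dims (k + 1))) (Fin (dims k)) ℝ)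
    (m N : ℕ) (c : ℝ) (V : Matrix (Fin (dims (N + 1))) (Fin (dims 0)) ℝ)
    (hW0 : Ws 0 = Emat m (dims 1) (dims (N + 1)) * V)
    (hWs : ∀ k, 0 < k → k < N + 1 → Ws k = c • Emat m (dims (k + 1)) (dims k))
    (hmid : ∀ k, 0 < k → k < N + 1 → m ≤ dims k) :
    ∀ M, 1 ≤ M → M ≤ N + 1 →
      chain dims Ws 0 M = c ^ (M - 1) • (Emat m (dims M) (dims (N + 1)) * V) := by
  intro M
  induction M with
  | zero => intro h; omega
  | succ M ih =>
    intro _ hM2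
    rcases Nat.eq_zero_or_pos M with h0 | h0
    · subst h0
      rw [chain_succ_s10, chain_zero, Matrix.mul_one, hW0]
      norm_num
    · have hcond : min m (min (dims (M + 1)) (dims (N + 1))) ≤ dims M :=
        le_trans (min_le_left _ _) (hmid M h0 (by omega))
      have hsc : c * c ^ (M - 1) = c ^ (M + 1 - 1) := by
        rw [← pow_succ']
        congr 1
        omega
      rw [chain_succ_s10, ih (by omega) (by omega), hWs M h0 (by omega), Matrix.smul_mul,
        Matrix.mul_smul, smul_smul, ← Matrix.mul_assoc, Emat_mul hcond, hsc]

/-- Any `W ∈ ℝ^{d×d'}` with `ε := ‖W‖_F > 0` factors as a product of `n` matrices (with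
intermediate dimensions at least `min{d,d'}`), each of Frobenius norm at most
`√(min{d,d'}) · ε^{1/n}`. Here `d = dims n`, `d' = dims 0`. -/
theorem factorize_with_small_norms (dims : ℕ → ℕ) (n : ℕ) (hn : 1 ≤ n)
    (hdims : ∀ j, 0 < j → j < n → min (dims n) (dims 0) ≤ dims j)
    (W : Matrix (Fin (dims n)) (Fin (dims 0)) ℝ) (hW : 0 < frobNorm W) :
    ∃ Ws : ∀ k : ℕ, Matrix (Fin (dims (k + 1))) (Fin (dims k)) ℝ,
      chain dims Ws 0 n = W ∧
      ∀ k < n, frobNorm (Ws k)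
        ≤ Real.sqrt (min (dims n) (dims 0)) * frobNorm W ^ ((1 : ℝ) / n) := by
  obtain ⟨N, rfl⟩ : ∃ N, n = N + 1 := ⟨n - 1, by omega⟩
  have hdn0 := frobNorm_pos_dims W hW
  set m := min (dims (N + 1)) (dims 0) with hm
  have hm1 : 1 ≤ m := le_min hdn0.1 hdn0.2
  set ε := frobNorm W with hε
  have hε0 : 0 < ε := hW
  set c : ℝ := ε ^ ((1 : ℝ) / ((N + 1 : ℕ) : ℝ)) with hc
  have hc0 : 0 < c := Real.rpow_pos_of_pos hε0 _
  have hNe : ((N + 1 : ℕ) : ℝ) ≠ 0 := by positivity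
  have hcn : c ^ (N + 1) = ε := by
    rw [hc, ← Real.rpow_natCast (ε ^ ((1 : ℝ) / ((N + 1 : ℕ) : ℝ))) (N + 1),
      ← Real.rpow_mul hε0.le, one_div_mul_cancel hNe, Real.rpow_one]
  have hs1 : (1 : ℝ) ≤ Real.sqrt m := by
    rw [show (1 : ℝ) = Real.sqrt 1 from Real.sqrt_one.symm]
    exact Real.sqrt_le_sqrt (by exact_mod_cast hm1)
  set s : ℝ := c / ε with hs
  have hsnn : (0 : ℝ) ≤ s := by positivity
  by_cases hcase : dims 0 ≤ dims (N + 1)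
  · -- Case A : m = dims 0, put W in the last factor
    have hmd0 : m = dims 0 := min_eq_right hcase
    have hd0m : dims 0 ≤ m := le_of_eq hmd0.symm
    set Wlast : Matrix (Fin (dims (N + 1))) (Fin (dims N)) ℝ :=
      s • (W * Emat m (dims 0) (dims N)) with hWl
    set Ws : ∀ k : ℕ, Matrix (Fin (dims (k + 1))) (Fin (dims k)) ℝ :=
      fun k => if h : k = N then cast (by rw [h]) Wlast
        else c • Emat m (dims (k + 1)) (dims k) with hWsdef
    have hWsN : Ws N = Wlast := by
      simp only [hWsdef]
      rw [dif_pos trivial]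
      exact eq_of_heq (cast_heq _ _)
    have hWsk : ∀ k, k ≠ N → Ws k = c • Emat m (dims (k + 1)) (dims k) := by
      intro k hk
      simp only [hWsdef]
      rw [dif_neg hk]
    have hd0N : dims 0 ≤ dims N := by
      rcases Nat.eq_zero_or_pos N with h0 | h0
      · rw [h0]
      · have := hdims N h0 (by omega); omega
    refine ⟨Ws, ?_, ?_⟩
    · have hch : chain dims Ws 0 N = c ^ N • Emat m (dims N) (dims 0) :=
        chainA dims Ws m N c hd0m (fun k hk => hWsk k (by omega)) hdims N le_rfl
      have hcond : min m (min (dims 0) (dims 0)) ≤ dims N := by omega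
      have hsc : s * c ^ N = 1 := by
        rw [hs, div_mul_eq_mul_div, ← pow_succ', hcn, div_self (ne_of_gt hε0)]
      rw [chain_succ_s10, hch, hWsN, hWl, Matrix.smul_mul, Matrix.mul_smul, smul_smul,
        Matrix.mul_assoc, Emat_mul hcond, Emat_eq_one hd0m, Matrix.mul_one, hsc, one_smul]
    · intro k hk
      by_cases hkN : k = N
      · subst hkN
        rw [hWsN, hWl, frobNorm_smul, frobNorm_mul_Emat hd0m hd0N, abs_of_nonneg hsnn,
          ← Nat.cast_min, ← hm]
        have hsε : s * ε = c := by
          rw [hs]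
          field_simp
        calc s * ε = c := hsε
          _ ≤ Real.sqrt m * c := le_mul_of_one_le_left hc0.le hs1
      · rw [hWsk k hkN, frobNorm_smul, abs_of_nonneg hc0.le, ← Nat.cast_min, ← hm]
        calc c * frobNorm (Emat m (dims (k + 1)) (dims k)) ≤ c * Real.sqrt m :=
              mul_le_mul_of_nonneg_left (frobNorm_Emat_le _ _ _) hc0.le
          _ = Real.sqrt m * c := mul_comm _ _
  · -- Case B : m = dims (N+1), put W in the first factor
    have hmdn : m = dims (N + 1) := min_eq_left (le_of_not_ge hcase)
    have hdnm : dims (N + 1) ≤ m := le_of_eq hmdn.symm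
    have hdn1 : dims (N + 1) ≤ dims 1 := by
      rcases Nat.eq_zero_or_pos N with h0 | h0
      · rw [h0]
      · have := hdims 1 (by omega) (by omega); omega
    set V : Matrix (Fin (dims (N + 1))) (Fin (dims 0)) ℝ := s • W with hV
    set Wfirst : Matrix (Fin (dims 1)) (Fin (dims 0)) ℝ :=
      Emat m (dims 1) (dims (N + 1)) * V with hWf
    set Ws : ∀ k : ℕ, Matrix (Fin (dims (k + 1))) (Fin (dims k)) ℝ :=
      fun k => if h : k = 0 then cast (by rw [h]) Wfirst
        else c • Emat m (dims (k + 1)) (dims k) with hWsdef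
    have hWs0 : Ws 0 = Wfirst := by
      simp only [hWsdef]
      rw [dif_pos trivial]
      exact eq_of_heq (cast_heq _ _)
    have hWsk : ∀ k, k ≠ 0 → Ws k = c • Emat m (dims (k + 1)) (dims k) := by
      intro k hk
      simp only [hWsdef]
      rw [dif_neg hk]
    refine ⟨Ws, ?_, ?_⟩
    · have hch := chainB dims Ws m N c V (hWs0.trans hWf)
        (fun k h1 h2 => hWsk k (by omega)) hdims (N + 1) (by omega) le_rfl
      have hsc : c ^ N * s = 1 := by
        rw [hs, mul_div_assoc']
        rw [mul_comm, ← pow_succ', hcn, div_self (ne_of_gt hε0)]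
      rw [hch, hV, Nat.add_sub_cancel, Emat_eq_one hdnm, Matrix.one_mul, smul_smul, hsc,
        one_smul]
    · intro k hk
      by_cases hk0 : k = 0
      · subst hk0
        rw [hWs0, hWf, hV, frobNorm_Emat_mul hdnm hdn1, frobNorm_smul, abs_of_nonneg hsnn,
          ← Nat.cast_min, ← hm]
        have hsε : s * ε = c := by
          rw [hs]
          field_simp
        calc s * ε = c := hsε
          _ ≤ Real.sqrt m * c := le_mul_of_one_le_left hc0.le hs1
      · rw [hWsk k hk0, frobNorm_smul, abs_of_nonneg hc0.le, ← Nat.cast_min, ← hm]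
        calc c * frobNorm (Emat m (dims (k + 1)) (dims k)) ≤ c * Real.sqrt m :=
              mul_le_mul_of_nonneg_left (frobNorm_Emat_le _ _ _) hc0.le
          _ = Real.sqrt m * c := mul_comm _ _
end

section
/- Consider ℓ(W) = (1/6)[(w₁₂ − 1)² + (w₂₁ − 1)² + w₂₂²] on 2×2 real matrices W = (w_{ij}). For any norm ‖·‖ on ℝ^{2×2} there exist constants c > 0 and c' ∈ ℝ such that every W with det(W) > 0 satisfies ‖W‖ ≥ c·ℓ(W)^{−1/2} + c'. In particular, along any curve with positive determinant whose loss tends to the global minimum 0, the norm diverges to infinity. -/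
open Matrix Filter

set_option maxHeartbeats 4000000

/-- The matrix sensing loss `ℓ(W) = (1/6)[(w₁₂ − 1)² + (w₂₁ − 1)² + w₂₂²]` on `2×2` matrices. -/
noncomputable def sensingLoss (W : Matrix (Fin 2) (Fin 2) ℝ) : ℝ :=
  (1 / 6) * ((W 0 1 - 1) ^ 2 + (W 1 0 - 1) ^ 2 + (W 1 1) ^ 2)

/-- For any norm `N` on `ℝ^{2×2}` there are constants `c > 0` and `c'` such that every `W` with
`det W > 0` satisfies `N(W) ≥ c·ℓ(W)^{−1/2} + c'`; in particular, along any curve of positive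
determinant whose loss tends to the global minimum `0`, the norm diverges to infinity. -/
theorem norm_diverges_matrix_sensing (N : Matrix (Fin 2) (Fin 2) ℝ → ℝ)
    (hN_add : ∀ A B, N (A + B) ≤ N A + N B)
    (hN_smul : ∀ (r : ℝ) A, N (r • A) = |r| * N A)
    (hN_zero : ∀ A, N A = 0 → A = 0) :
    (∃ c : ℝ, 0 < c ∧ ∃ c' : ℝ,
      ∀ W : Matrix (Fin 2) (Fin 2) ℝ, 0 < W.det →
        c * sensingLoss W ^ (-(1 : ℝ) / 2) + c' ≤ N W) ∧
    ∀ Wc : ℝ → Matrix (Fin 2) (Fin 2) ℝ,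
      (∀ t : ℝ, 0 < (Wc t).det) →
      Filter.Tendsto (fun t => sensingLoss (Wc t)) Filter.atTop (nhds 0) →
      Filter.Tendsto (fun t => N (Wc t)) Filter.atTop Filter.atTop := by
  classical
  -- basic norm facts
  have hN0 : N 0 = 0 := by
    have h := hN_smul 0 0
    simpa using h
  have hNneg : ∀ A, N (-A) = N A := by
    intro A
    have h := hN_smul (-1) A
    simpa using h
  have hNnonneg : ∀ A, 0 ≤ N A := by
    intro A
    have h := hN_add A (-A)
    rw [add_neg_cancel, hN0, hNneg] at h
    linarith
  -- basis matrices
  set E11 : Matrix (Fin 2) (Fin 2) ℝ := !![1,0;0,0] with hE11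
  set E12 : Matrix (Fin 2) (Fin 2) ℝ := !![0,1;0,0] with hE12
  set E21 : Matrix (Fin 2) (Fin 2) ℝ := !![0,0;1,0] with hE21
  set E22 : Matrix (Fin 2) (Fin 2) ℝ := !![0,0;0,1] with hE22
  have hβpos : 0 < N E11 := by
    rcases lt_or_eq_of_le (hNnonneg E11) with h | h
    · exact h
    · exfalso
      have h0 : E11 = 0 := hN_zero _ h.symm
      have := congrFun (congrFun h0 0) 0
      simp [hE11] at this
  set β : ℝ := N E11 with hβ
  set M : ℝ := 2 * N E12 + 2 * N E21 + N E22 with hM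
  have hMnonneg : 0 ≤ M := by
    have := hNnonneg E12; have := hNnonneg E21; have := hNnonneg E22
    rw [hM]; linarith
  have sqrt6_pos : (0:ℝ) < Real.sqrt 6 := Real.sqrt_pos.mpr (by norm_num)
  -- loss is positive on positive-determinant matrices
  have hLpos : ∀ W : Matrix (Fin 2) (Fin 2) ℝ, 0 < W.det → 0 < sensingLoss W := by
    intro W hW
    have h0 : 0 ≤ sensingLoss W := by unfold sensingLoss; positivity
    rcases h0.lt_or_eq with h | h
    · exact h
    · exfalso
      replace h := h.symm
      unfold sensingLoss at h
      have h1 : (W 0 1 - 1) ^ 2 = 0 := by nlinarith [sq_nonneg (W 1 0 - 1), sq_nonneg (W 1 1)]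
      have h2 : (W 1 0 - 1) ^ 2 = 0 := by nlinarith [sq_nonneg (W 0 1 - 1), sq_nonneg (W 1 1)]
      have h3 : (W 1 1) ^ 2 = 0 := by nlinarith [sq_nonneg (W 0 1 - 1), sq_nonneg (W 1 0 - 1)]
      have e1 : W 0 1 = 1 := by nlinarith [h1]
      have e2 : W 1 0 = 1 := by nlinarith [h2]
      have e3 : W 1 1 = 0 := by nlinarith [h3]
      rw [Matrix.det_fin_two, e1, e2, e3] at hW
      linarith
  -- the main quantitative bound
  have main : ∀ W : Matrix (Fin 2) (Fin 2) ℝ, 0 < W.det →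
      (β / Real.sqrt 6) * sensingLoss W ^ (-(1 : ℝ) / 2) + (-(2 * β) - M) ≤ N W := by
    intro W hdet
    have hL : 0 < sensingLoss W := hLpos W hdet
    have hrpow : sensingLoss W ^ (-(1 : ℝ) / 2) = (Real.sqrt (sensingLoss W))⁻¹ := by
      rw [Real.sqrt_eq_rpow, ← Real.rpow_neg hL.le]
      norm_num
    have hsqL : 0 < Real.sqrt (sensingLoss W) := Real.sqrt_pos.mpr hL
    by_cases hcase : sensingLoss W < 1 / 6
    · -- small loss: the (1,1) entry is large
      set s : ℝ := Real.sqrt (6 * sensingLoss W) with hs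
      have hspos : 0 < s := Real.sqrt_pos.mpr (by linarith)
      have hslt1 : s < 1 := by
        rw [hs, show (1:ℝ) = Real.sqrt 1 by simp]
        exact Real.sqrt_lt_sqrt (by linarith) (by linarith)
      have habs : ∀ x : ℝ, x ^ 2 ≤ 6 * sensingLoss W → |x| ≤ s := by
        intro x hx
        rw [hs, ← Real.sqrt_sq_eq_abs]
        exact Real.sqrt_le_sqrt hx
      have h12 : |W 0 1 - 1| ≤ s := habs _ (by
        unfold sensingLoss; nlinarith [sq_nonneg (W 1 0 - 1), sq_nonneg (W 1 1)])
      have h21 : |W 1 0 - 1| ≤ s := habs _ (by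
        unfold sensingLoss; nlinarith [sq_nonneg (W 0 1 - 1), sq_nonneg (W 1 1)])
      have h22 : |W 1 1| ≤ s := habs _ (by
        unfold sensingLoss; nlinarith [sq_nonneg (W 0 1 - 1), sq_nonneg (W 1 0 - 1)])
      have h12' := abs_le.mp h12
      have h21' := abs_le.mp h21
      have h22' := abs_le.mp h22
      have hdet2 : W 0 1 * W 1 0 < W 0 0 * W 1 1 := by
        rw [Matrix.det_fin_two] at hdet; linarith
      -- |w₁₁| * s ≥ (1-s)²
      have hw11 : (1 - s) ^ 2 ≤ |W 0 0| * s := by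
        have hb : W 0 0 * W 1 1 ≤ |W 0 0| * s := by
          calc W 0 0 * W 1 1 ≤ |W 0 0 * W 1 1| := le_abs_self _
            _ = |W 0 0| * |W 1 1| := abs_mul _ _
            _ ≤ |W 0 0| * s := by
                exact mul_le_mul_of_nonneg_left h22 (abs_nonneg _)
        nlinarith [h12'.1, h21'.1, hslt1]
      have hw11' : 1 / s - 2 ≤ |W 0 0| := by
        rw [sub_le_iff_le_add, div_le_iff₀ hspos]
        nlinarith [hw11, hspos, sq_nonneg s]
      -- norm lower bound: β|w₁₁| ≤ N W + M
      have hdecomp : (W 0 0) • E11 = W + (-((W 0 1) • E12 + ((W 1 0) • E21 + (W 1 1) • E22))) := by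
        ext i j
        fin_cases i <;> fin_cases j <;>
          simp [hE11, hE12, hE21, hE22, Matrix.smul_apply]
      have hNR : N ((W 0 1) • E12 + ((W 1 0) • E21 + (W 1 1) • E22)) ≤ M := by
        have t1 := hN_add ((W 0 1) • E12) ((W 1 0) • E21 + (W 1 1) • E22)
        have t2 := hN_add ((W 1 0) • E21) ((W 1 1) • E22)
        rw [hN_smul] at t1
        rw [hN_smul, hN_smul] at t2
        have b12 : |W 0 1| ≤ 2 := by
          rcases abs_le.mp h12 with ⟨u, v⟩
          rw [abs_le]; constructor <;> nlinarith [hslt1, hspos]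
        have b21 : |W 1 0| ≤ 2 := by
          rcases abs_le.mp h21 with ⟨u, v⟩
          rw [abs_le]; constructor <;> nlinarith [hslt1, hspos]
        have b22 : |W 1 1| ≤ 1 := le_trans h22 hslt1.le
        have n12 := hNnonneg E12
        have n21 := hNnonneg E21
        have n22 := hNnonneg E22
        rw [hM]
        nlinarith [mul_le_mul_of_nonneg_right b12 n12,
          mul_le_mul_of_nonneg_right b21 n21, mul_le_mul_of_nonneg_right b22 n22]
      have hkey : |W 0 0| * β ≤ N W + M := by
        have h := hN_add W (-((W 0 1) • E12 + ((W 1 0) • E21 + (W 1 1) • E22)))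
        rw [← hdecomp, hNneg] at h
        have h' := hN_smul (W 0 0) E11
        rw [h'] at h
        nlinarith [hNR]
      -- convert to the rpow form
      have hconv : (β / Real.sqrt 6) * sensingLoss W ^ (-(1 : ℝ) / 2) = β / s := by
        rw [hrpow, hs, Real.sqrt_mul (by norm_num : (0:ℝ) ≤ 6)]
        field_simp
      rw [hconv]
      have h1s : β / s = β * (1 / s) := by ring
      have : β * (1 / s) - 2 * β ≤ β * |W 0 0| := by nlinarith [hw11', hβpos]
      nlinarith [hkey, hβpos, this]
    · -- large loss: bound is trivially nonpositive
      push_neg at hcase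
      have hle : sensingLoss W ^ (-(1 : ℝ) / 2) ≤ Real.sqrt 6 := by
        rw [hrpow]
        have h1 : Real.sqrt (1/6) ≤ Real.sqrt (sensingLoss W) := Real.sqrt_le_sqrt hcase
        have h2 : (0:ℝ) < Real.sqrt (1/6) := Real.sqrt_pos.mpr (by norm_num)
        have h3 : (Real.sqrt (sensingLoss W))⁻¹ ≤ (Real.sqrt (1/6))⁻¹ :=
          inv_anti₀ h2 h1
        have h4 : (Real.sqrt ((1:ℝ)/6))⁻¹ = Real.sqrt 6 := by
          rw [show ((1:ℝ)/6) = (6:ℝ)⁻¹ by norm_num, Real.sqrt_inv, inv_inv]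
        rw [h4] at h3; exact h3
      have hcle : (β / Real.sqrt 6) * sensingLoss W ^ (-(1 : ℝ) / 2) ≤ β := by
        have := mul_le_mul_of_nonneg_left hle (le_of_lt (div_pos hβpos sqrt6_pos))
        calc (β / Real.sqrt 6) * sensingLoss W ^ (-(1 : ℝ) / 2)
            ≤ (β / Real.sqrt 6) * Real.sqrt 6 := this
          _ = β := by field_simp
      have := hNnonneg W
      linarith
  refine ⟨⟨β / Real.sqrt 6, div_pos hβpos sqrt6_pos, -(2 * β) - M, main⟩, ?_⟩
  -- part 2: divergence along curves
  intro Wc hdet hL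
  have hpos : ∀ t, 0 < sensingLoss (Wc t) := fun t => hLpos _ (hdet t)
  have hg : Filter.Tendsto (fun t => Real.sqrt (sensingLoss (Wc t)))
      Filter.atTop (nhdsWithin 0 (Set.Ioi 0)) := by
    rw [tendsto_nhdsWithin_iff]
    constructor
    · have hc : Filter.Tendsto Real.sqrt (nhds 0) (nhds (Real.sqrt 0)) :=
        Real.continuous_sqrt.tendsto 0
      rw [Real.sqrt_zero] at hc
      exact hc.comp hL
    · exact Filter.Eventually.of_forall fun t => Real.sqrt_pos.mpr (hpos t)
  have hinv : Filter.Tendsto (fun t => (Real.sqrt (sensingLoss (Wc t)))⁻¹)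
      Filter.atTop Filter.atTop := hg.inv_tendsto_nhdsGT_zero
  have hrpow : Filter.Tendsto (fun t => sensingLoss (Wc t) ^ (-(1 : ℝ) / 2))
      Filter.atTop Filter.atTop := by
    have heq : (fun t => sensingLoss (Wc t) ^ (-(1 : ℝ) / 2))
        = fun t => (Real.sqrt (sensingLoss (Wc t)))⁻¹ := by
      funext t
      rw [Real.sqrt_eq_rpow, ← Real.rpow_neg (hpos t).le]
      norm_num
    rw [heq]; exact hinv
  have hlow : Filter.Tendsto
      (fun t => (β / Real.sqrt 6) * sensingLoss (Wc t) ^ (-(1 : ℝ) / 2) + (-(2 * β) - M))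
      Filter.atTop Filter.atTop :=
    tendsto_atTop_add_const_right _ _ (hrpow.const_mul_atTop (div_pos hβpos sqrt6_pos))
  exact tendsto_atTop_mono (fun t => main (Wc t) (hdet t)) hlow
end
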